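/- arXiv:2411.13880 — 3 statements merged into one kernel-verified Lean document; each statement's English description precedes it below -/
import Mathlib

section
/- Let n ≥ 1, 0 < β < n, 1 < p₁ < n/β and 1/p₂ = 1/p₁ − β/n. There is a constant C, depending only on n, β and p₁, such that for all integers j, k with k ≥ j + 2 and every f ∈ L^{p₁}(ℝⁿ) supported in the closed ball B_j = {x : |x| ≤ 2^j}, one has ‖(I^β f) · χ_{F_k}‖_{L^{p₂}} ≤ C · 2^{(β − n(1 − 1/p₂))(k − j)} ‖f‖_{L^{p₁}}. -/
open MeasureTheory

/-- The Riesz potential `I^β f (x) = ∫ f(y) ‖x - y‖^(β - n) dy` on `ℝⁿ`. -/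
noncomputable def rieszPot (n : ℕ) (β : ℝ) (f : EuclideanSpace ℝ (Fin n) → ℝ)
    (x : EuclideanSpace ℝ (Fin n)) : ℝ :=
  ∫ y, f y * ‖x - y‖ ^ (β - (n : ℝ))

/-- The dyadic annulus `F_k = B_k \ B_{k-1}`, where `B_k` is the closed ball of
radius `2^k` centred at the origin. -/
def annulus (n : ℕ) (k : ℤ) : Set (EuclideanSpace ℝ (Fin n)) :=
  Metric.closedBall 0 ((2 : ℝ) ^ k) \ Metric.closedBall 0 ((2 : ℝ) ^ (k - 1))

/-!
For `x ∈ F_k` and `y ∈ B_j` with `k ≥ j + 2` we have `|x - y| ≥ 2^(k-2)`, so on `F_k` the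
potential is bounded pointwise by `2^((k-2)(β-n)) ‖f‖₁`. Integrating this bound over `F_k ⊆ B_k`
and estimating `‖f‖₁ ≤ ‖f‖_{p₁} |B_j|^(1 - 1/p₁)` by Hölder gives the claim, since
`n/p₂ = n/p₁ - β` makes the powers of `2` combine into `2^((β - n(1 - 1/p₂))(k - j))`.
-/

open Metric Real

section LpBounds

variable {α : Type*} [MeasurableSpace α] {μ : Measure α}

theorem eLpNorm_indicator_le_of_enorm_le {ε : Type*} [TopologicalSpace ε]
    [ESeminormedAddMonoid ε] {s : Set α} (hs : MeasurableSet s) {g : α → ε} {C : ENNReal}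
    (hg : ∀ x ∈ s, ‖g x‖ₑ ≤ C) (p : ENNReal) :
    eLpNorm (s.indicator g) p μ ≤ C * μ s ^ p.toReal⁻¹ := by
  rw [eLpNorm_indicator_eq_eLpNorm_restrict hs, ← Measure.restrict_apply_univ]
  exact eLpNorm_le_of_ae_enorm_bound ((ae_restrict_iff' hs).mpr (.of_forall hg))

theorem eLpNorm_one_le_of_support_subset {E : Type*} [NormedAddCommGroup E] {f : α → E}
    {s : Set α} (hs : MeasurableSet s) (hf : Function.support f ⊆ s) {p : ENNReal} (hp : 1 ≤ p)
    (hfm : AEStronglyMeasurable f μ) :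
    eLpNorm f 1 μ ≤ eLpNorm f p μ * μ s ^ (1 - 1 / p.toReal) := by
  rw [← Set.indicator_eq_self.mpr hf, eLpNorm_indicator_eq_eLpNorm_restrict hs,
    eLpNorm_indicator_eq_eLpNorm_restrict hs, ← Measure.restrict_apply_univ]
  calc eLpNorm f 1 (μ.restrict s)
      ≤ eLpNorm f p (μ.restrict s) *
          μ.restrict s Set.univ ^ (1 / (1 : ENNReal).toReal - 1 / p.toReal) :=
        eLpNorm_le_eLpNorm_mul_rpow_measure_univ hp hfm.restrict
    _ = _ := by norm_num

end LpBounds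

theorem zpow_sub_two_le_norm_sub {E : Type*} [SeminormedAddCommGroup E] {x y : E} {j k : ℤ}
    (hjk : j + 2 ≤ k) (hx : (2 : ℝ) ^ (k - 1) < ‖x‖) (hy : ‖y‖ ≤ 2 ^ j) :
    (2 : ℝ) ^ (k - 2) ≤ ‖x - y‖ := by
  have hj : (2 : ℝ) ^ j ≤ 2 ^ (k - 2) := zpow_le_zpow_right₀ one_le_two (by omega)
  have hk : (2 : ℝ) ^ (k - 1) = 2 * 2 ^ (k - 2) := by
    rw [← zpow_one_add₀ two_ne_zero]; ring_nf
  linarith [norm_sub_norm_le x y]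

section RieszPotential

variable {n : ℕ}

theorem norm_sub_rpow_le_of_mem_annulus {x y : EuclideanSpace ℝ (Fin n)} {j k : ℤ}
    (hjk : j + 2 ≤ k) (hx : x ∈ annulus n k) (hy : y ∈ closedBall 0 (2 ^ j)) {s : ℝ}
    (hs : s ≤ 0) : ‖x - y‖ ^ s ≤ 2 ^ (((k : ℝ) - 2) * s) := by
  have hx' : (2 : ℝ) ^ (k - 1) < ‖x‖ := by simpa using hx.2
  have hy' : ‖y‖ ≤ 2 ^ j := by simpa using hy
  calc ‖x - y‖ ^ s ≤ ((2 : ℝ) ^ (k - 2)) ^ s :=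
        rpow_le_rpow_of_nonpos (zpow_pos two_pos _) (zpow_sub_two_le_norm_sub hjk hx' hy') hs
    _ = 2 ^ (((k : ℝ) - 2) * s) := by
        rw [← rpow_intCast, ← rpow_mul zero_le_two]; push_cast; rfl

theorem enorm_rieszPot_le_of_mem_annulus {β : ℝ} (hβn : β ≤ n) {j k : ℤ} (hjk : j + 2 ≤ k)
    {f : EuclideanSpace ℝ (Fin n) → ℝ} (hf : Function.support f ⊆ closedBall 0 (2 ^ j))
    {x : EuclideanSpace ℝ (Fin n)} (hx : x ∈ annulus n k) :
    ‖rieszPot n β f x‖ₑ ≤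
      ENNReal.ofReal (2 ^ (((k : ℝ) - 2) * (β - n))) * eLpNorm f 1 volume := by
  rw [eLpNorm_one_eq_lintegral_enorm, ← lintegral_const_mul' _ _ ENNReal.ofReal_ne_top]
  refine (enorm_integral_le_lintegral_enorm _).trans (lintegral_mono fun y => ?_)
  by_cases hy : f y = 0
  · simp [hy]
  rw [enorm_mul, mul_comm, Real.enorm_eq_ofReal (rpow_nonneg (norm_nonneg _) _)]
  gcongr
  exact norm_sub_rpow_le_of_mem_annulus hjk hx (hf hy) (by linarith)

theorem eLpNorm_indicator_annulus_rieszPot_le {β : ℝ} (hβn : β ≤ n) {j k : ℤ}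
    (hjk : j + 2 ≤ k) {f : EuclideanSpace ℝ (Fin n) → ℝ} {p : ENNReal} (hp : 1 ≤ p)
    (hfm : AEStronglyMeasurable f volume) (hf : Function.support f ⊆ closedBall 0 (2 ^ j))
    (q : ENNReal) :
    eLpNorm ((annulus n k).indicator (rieszPot n β f)) q volume ≤
      ENNReal.ofReal (2 ^ (((k : ℝ) - 2) * (β - n))) *
        (eLpNorm f p volume * volume (closedBall (0 : EuclideanSpace ℝ (Fin n)) (2 ^ j)) ^
          (1 - 1 / p.toReal)) *
        volume (closedBall (0 : EuclideanSpace ℝ (Fin n)) (2 ^ k)) ^ q.toReal⁻¹ := by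
  have hannulus : MeasurableSet (annulus n k) :=
    measurableSet_closedBall.diff measurableSet_closedBall
  refine (eLpNorm_indicator_le_of_enorm_le hannulus
    (fun x hx => enorm_rieszPot_le_of_mem_annulus hβn hjk hf hx) q).trans ?_
  gcongr
  · exact eLpNorm_one_le_of_support_subset measurableSet_closedBall hf hp hfm
  · exact Set.sdiff_subset

theorem volume_closedBall_two_zpow (m : ℤ) :
    volume (closedBall (0 : EuclideanSpace ℝ (Fin n)) (2 ^ m)) =
      ENNReal.ofReal
        (2 ^ ((m : ℝ) * n) * volume.real (ball (0 : EuclideanSpace ℝ (Fin n)) 1)) := by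
  rw [← ofReal_measureReal measure_closedBall_lt_top.ne,
    Measure.addHaar_real_closedBall _ _ (zpow_pos two_pos m).le, finrank_euclideanSpace_fin,
    ← rpow_intCast, ← rpow_natCast, ← rpow_mul zero_le_two]

end RieszPotential

theorem two_rpow_mul_ball_volume_rpow_eq {n β p₁ p₂ ν : ℝ} (hn : n ≠ 0) (hν : 0 < ν)
    (hp₂ : 1 / p₂ = 1 / p₁ - β / n) (j k : ℝ) :
    2 ^ ((k - 2) * (β - n)) * (2 ^ (j * n) * ν) ^ (1 - 1 / p₁) * (2 ^ (k * n) * ν) ^ (1 / p₂) =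
      2 ^ (2 * (n - β)) * ν ^ (1 - 1 / p₁ + 1 / p₂) *
        2 ^ ((β - n * (1 - 1 / p₂)) * (k - j)) := by
  have hexp : (k - 2) * (β - n) + j * n * (1 - 1 / p₁) + k * n * (1 / p₂) =
      2 * (n - β) + (β - n * (1 - 1 / p₂)) * (k - j) := by
    rw [hp₂]; field_simp; ring
  rw [mul_rpow (by positivity) hν.le, mul_rpow (by positivity) hν.le, ← rpow_mul zero_le_two,
    ← rpow_mul zero_le_two, rpow_add hν]
  calc _ = 2 ^ ((k - 2) * (β - n) + j * n * (1 - 1 / p₁) + k * n * (1 / p₂)) *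
        (ν ^ (1 - 1 / p₁) * ν ^ (1 / p₂)) := by
        rw [rpow_add two_pos, rpow_add two_pos]; ring
    _ = _ := by rw [hexp, rpow_add two_pos]; ring

theorem stmt_2_general (n : ℕ) (β p₁ p₂ : ℝ) (hβ0 : 0 < β) (hβn : β < n)
    (hp₁ : 1 < p₁) (hp₁n : p₁ < n / β) (hp₂ : 1 / p₂ = 1 / p₁ - β / n) :
    ∃ C : ℝ, 0 < C ∧ ∀ (j k : ℤ), j + 2 ≤ k →
      ∀ f : EuclideanSpace ℝ (Fin n) → ℝ,
        MemLp f (ENNReal.ofReal p₁) volume →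
        Function.support f ⊆ Metric.closedBall 0 ((2 : ℝ) ^ j) →
        eLpNorm ((annulus n k).indicator (rieszPot n β f)) (ENNReal.ofReal p₂) volume ≤
          ENNReal.ofReal
              (C * (2 : ℝ) ^ ((β - n * (1 - 1 / p₂)) * ((k : ℝ) - (j : ℝ)))) *
            eLpNorm f (ENNReal.ofReal p₁) volume := by
  have hn : (0 : ℝ) < n := hβ0.trans hβn
  have h1p₂ : 0 < 1 / p₂ := by
    rw [hp₂, sub_pos, div_lt_div_iff₀ hn (by linarith)]
    nlinarith [(lt_div_iff₀ hβ0).mp hp₁n]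
  have h1p₁ : 0 ≤ 1 - 1 / p₁ := by linarith [one_div_le_one_div_of_le one_pos hp₁.le]
  set ν := volume.real (ball (0 : EuclideanSpace ℝ (Fin n)) 1)
  have hν : 0 < ν := ENNReal.toReal_pos (measure_ball_pos _ _ one_pos).ne' measure_ball_lt_top.ne
  refine ⟨2 ^ (2 * (n - β)) * ν ^ (1 - 1 / p₁ + 1 / p₂), by positivity,
    fun j k hjk f hf hsupp => ?_⟩
  refine (eLpNorm_indicator_annulus_rieszPot_le hβn.le hjk (ENNReal.one_le_ofReal.mpr hp₁.le)
    hf.1 hsupp _).trans (le_of_eq ?_)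
  rw [ENNReal.toReal_ofReal (by linarith), ENNReal.toReal_ofReal (one_div_pos.mp h1p₂).le,
    ← one_div, volume_closedBall_two_zpow, volume_closedBall_two_zpow,
    ENNReal.ofReal_rpow_of_nonneg (by positivity) h1p₁,
    ENNReal.ofReal_rpow_of_nonneg (by positivity) h1p₂.le,
    ← two_rpow_mul_ball_volume_rpow_eq hn.ne' hν hp₂,
    ENNReal.ofReal_mul (by positivity), ENNReal.ofReal_mul (by positivity)]
  ring

/-- for `f ∈ L^{p₁}` supported in `B_j` and `k ≥ j + 2`, one has
`‖(I^β f)·χ_{F_k}‖_{L^{p₂}} ≤ C 2^{(β - n(1 - 1/p₂))(k-j)} ‖f‖_{L^{p₁}}`. -/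
theorem stmt_2 (n : ℕ) (hn : 1 ≤ n) (β p₁ p₂ : ℝ) (hβ0 : 0 < β) (hβn : β < n)
    (hp₁ : 1 < p₁) (hp₁n : p₁ < n / β) (hp₂ : 1 / p₂ = 1 / p₁ - β / n) :
    ∃ C : ℝ, 0 < C ∧ ∀ (j k : ℤ), j + 2 ≤ k →
      ∀ f : EuclideanSpace ℝ (Fin n) → ℝ,
        MemLp f (ENNReal.ofReal p₁) volume →
        Function.support f ⊆ Metric.closedBall 0 ((2 : ℝ) ^ j) →
        eLpNorm ((annulus n k).indicator (rieszPot n β f)) (ENNReal.ofReal p₂) volume ≤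
          ENNReal.ofReal
              (C * (2 : ℝ) ^ ((β - n * (1 - 1 / p₂)) * ((k : ℝ) - (j : ℝ)))) *
            eLpNorm f (ENNReal.ofReal p₁) volume :=
  stmt_2_general n β p₁ p₂ hβ0 hβn hp₁ hp₁n hp₂
end

section
/- Let 1 < q < ∞ and let α, μ be reals with 0 < 2μ < α, and let (c_j)_{j∈ℤ} be nonnegative extended reals. Then there is a constant C, depending only on q, α and μ, such that sup_{L∈ℤ} 2^{−Lμq} ∑_{k ≤ L} 2^{kαq} ( ∑_{j ≥ k} c_j 2^{−jα} )^{q} ≤ C · sup_{L∈ℤ} 2^{−Lμq} ∑_{j ≤ L} c_j^{q}. -/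
/-! Testing the supremum `S` on the right at `L = j` gives `c_j ≤ 2^{jμ} S^{1/q}`. Since `μ < α`,
the inner tail `∑_{j ≥ k} c_j 2^{-jα}` is then dominated by a geometric series and is
`≲ 2^{k(μ-α)} S^{1/q}`, so the `k`-th term on the left is `≲ 2^{kμq} S`. Summing this second
geometric series over `k ≤ L` (here `μ > 0`) gives `≲ 2^{Lμq} S`, which the weight `2^{-Lμq}`
cancels. -/

open scoped ENNReal

def natEquivIntGE (k : ℤ) : ℕ ≃ {j : ℤ // k ≤ j} where
  toFun n := ⟨k + n, by omega⟩
  invFun j := (j.1 - k).toNat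
  left_inv n := by simp
  right_inv j := Subtype.ext (by have := j.2; simp only; omega)

section GeometricSums

variable {b : ℝ}

lemma ofReal_rpow_mul_ofReal_rpow (hb : 0 < b) (x y : ℝ) :
    ENNReal.ofReal (b ^ x) * ENNReal.ofReal (b ^ y) = ENNReal.ofReal (b ^ (x + y)) := by
  rw [← ENNReal.ofReal_mul (by positivity), Real.rpow_add hb]

lemma ofReal_rpow_rpow (hb : 0 < b) (x q : ℝ) :
    ENNReal.ofReal (b ^ x) ^ q = ENNReal.ofReal (b ^ (x * q)) := by
  rw [ENNReal.ofReal_rpow_of_pos (by positivity), Real.rpow_mul hb.le]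

lemma tsum_ofReal_rpow_intGE (hb : 1 < b) {t : ℝ} (ht : t < 0) (k : ℤ) :
    ∑' j : {j : ℤ // k ≤ j}, ENNReal.ofReal (b ^ ((j : ℝ) * t)) =
      ENNReal.ofReal (b ^ ((k : ℝ) * t) / (1 - b ^ t)) := by
  have hb0 : 0 < b := by linarith
  have hr : b ^ t < 1 := Real.rpow_lt_one_of_one_lt_of_neg hb ht
  have hr0 : 0 ≤ b ^ t := by positivity
  have hterm (n : ℕ) : b ^ (((k + n : ℤ) : ℝ) * t) = b ^ ((k : ℝ) * t) * (b ^ t) ^ n := by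
    rw [← Real.rpow_mul_natCast hb0.le, ← Real.rpow_add hb0]
    push_cast
    ring_nf
  rw [← (natEquivIntGE k).tsum_eq, div_eq_mul_inv, ← tsum_geometric_of_lt_one hr0 hr,
    ← tsum_mul_left, ENNReal.ofReal_tsum_of_nonneg (fun n => by positivity)
      ((summable_geometric_of_lt_one hr0 hr).mul_left _)]
  exact tsum_congr fun n => congrArg ENNReal.ofReal (hterm n)

lemma tsum_ofReal_rpow_intLE (hb : 1 < b) {t : ℝ} (ht : 0 < t) (L : ℤ) :
    ∑' k : {k : ℤ // k ≤ L}, ENNReal.ofReal (b ^ ((k : ℝ) * t)) =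
      ENNReal.ofReal (b ^ ((L : ℝ) * t) / (1 - b ^ (-t))) := by
  let e : {k : ℤ // k ≤ L} ≃ {j : ℤ // -L ≤ j} :=
    (Equiv.neg ℤ).subtypeEquiv fun k => by simp
  rw [← e.symm.tsum_eq]
  convert tsum_ofReal_rpow_intGE hb (neg_lt_zero.mpr ht) (-L) using 4 with j
  · simp [e, Equiv.subtypeEquiv]
  · push_cast; ring_nf

end GeometricSums

section WeightedSums

variable {b q μ α : ℝ} {c : ℤ → ℝ≥0∞} {S : ℝ≥0∞}

lemma le_ofReal_rpow_mul_rpow_inv_of_forall_partialSum_le (hb : 0 < b) (hq : 0 < q)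
    (hS : ∀ L : ℤ,
      ENNReal.ofReal (b ^ (-(L : ℝ) * μ * q)) * ∑' j : {j : ℤ // j ≤ L}, c j.1 ^ q ≤ S)
    (j : ℤ) :
    c j ≤ ENNReal.ofReal (b ^ ((j : ℝ) * μ)) * S ^ q⁻¹ := by
  have hcq : c j ^ q ≤ ENNReal.ofReal (b ^ ((j : ℝ) * μ * q)) * S :=
    calc c j ^ q ≤ ∑' j' : {j' : ℤ // j' ≤ j}, c j'.1 ^ q :=
          ENNReal.le_tsum (f := fun j' : {j' : ℤ // j' ≤ j} => c j'.1 ^ q) ⟨j, le_rfl⟩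
      _ = ENNReal.ofReal (b ^ ((j : ℝ) * μ * q)) * (ENNReal.ofReal (b ^ (-(j : ℝ) * μ * q)) *
            ∑' j' : {j' : ℤ // j' ≤ j}, c j'.1 ^ q) := by
          rw [← mul_assoc, ofReal_rpow_mul_ofReal_rpow hb,
            show (j : ℝ) * μ * q + -(j : ℝ) * μ * q = 0 by ring, Real.rpow_zero, ENNReal.ofReal_one,
            one_mul]
      _ ≤ ENNReal.ofReal (b ^ ((j : ℝ) * μ * q)) * S := by gcongr; exact hS j
  have hexp : (j : ℝ) * μ * q * q⁻¹ = (j : ℝ) * μ := by field_simp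
  rw [← hexp, ← ofReal_rpow_rpow hb, ← ENNReal.mul_rpow_of_nonneg _ _ (inv_nonneg.mpr hq.le)]
  exact (ENNReal.le_rpow_inv_iff hq).mpr hcq

lemma tsum_intGE_mul_ofReal_rpow_le (hb : 1 < b) (hμα : μ < α) {A : ℝ≥0∞}
    (hc : ∀ j, c j ≤ ENNReal.ofReal (b ^ ((j : ℝ) * μ)) * A) (k : ℤ) :
    ∑' j : {j : ℤ // k ≤ j}, c j.1 * ENNReal.ofReal (b ^ (-(j.1 : ℝ) * α)) ≤
      A * ENNReal.ofReal (b ^ ((k : ℝ) * (μ - α)) / (1 - b ^ (μ - α))) := by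
  have hb0 : 0 < b := by linarith
  calc ∑' j : {j : ℤ // k ≤ j}, c j.1 * ENNReal.ofReal (b ^ (-(j.1 : ℝ) * α))
      ≤ ∑' j : {j : ℤ // k ≤ j}, A * ENNReal.ofReal (b ^ ((j.1 : ℝ) * (μ - α))) := by
        refine ENNReal.tsum_le_tsum fun j => ?_
        calc c j.1 * ENNReal.ofReal (b ^ (-(j.1 : ℝ) * α))
            ≤ ENNReal.ofReal (b ^ ((j.1 : ℝ) * μ)) * A *
                ENNReal.ofReal (b ^ (-(j.1 : ℝ) * α)) := by
              gcongr; exact hc j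
          _ = A * ENNReal.ofReal (b ^ ((j.1 : ℝ) * (μ - α))) := by
              rw [mul_right_comm, mul_comm, ofReal_rpow_mul_ofReal_rpow hb0]; ring_nf
    _ = A * ENNReal.ofReal (b ^ ((k : ℝ) * (μ - α)) / (1 - b ^ (μ - α))) := by
        rw [ENNReal.tsum_mul_left, tsum_ofReal_rpow_intGE hb (by linarith)]

lemma ofReal_rpow_mul_tsum_intGE_rpow_le (hb : 1 < b) (hq : 0 < q) (hμα : μ < α)
    (hS : ∀ L : ℤ,
      ENNReal.ofReal (b ^ (-(L : ℝ) * μ * q)) * ∑' j : {j : ℤ // j ≤ L}, c j.1 ^ q ≤ S)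
    (k : ℤ) :
    ENNReal.ofReal (b ^ ((k : ℝ) * α * q)) *
        (∑' j : {j : ℤ // k ≤ j}, c j.1 * ENNReal.ofReal (b ^ (-(j.1 : ℝ) * α))) ^ q ≤
      ENNReal.ofReal (b ^ ((k : ℝ) * (μ * q))) *
        (ENNReal.ofReal ((1 - b ^ (μ - α)) ^ (-q)) * S) := by
  have hb0 : 0 < b := by linarith
  have hr : 0 < 1 - b ^ (μ - α) :=
    sub_pos.mpr (Real.rpow_lt_one_of_one_lt_of_neg hb (sub_neg.mpr hμα))
  have htail := tsum_intGE_mul_ofReal_rpow_le hb hμα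
    (le_ofReal_rpow_mul_rpow_inv_of_forall_partialSum_le hb0 hq hS) k
  calc ENNReal.ofReal (b ^ ((k : ℝ) * α * q)) *
        (∑' j : {j : ℤ // k ≤ j}, c j.1 * ENNReal.ofReal (b ^ (-(j.1 : ℝ) * α))) ^ q
      ≤ ENNReal.ofReal (b ^ ((k : ℝ) * α * q)) *
          (S ^ q⁻¹ * ENNReal.ofReal (b ^ ((k : ℝ) * (μ - α)) / (1 - b ^ (μ - α)))) ^ q := by
        gcongr
    _ = ENNReal.ofReal (b ^ ((k : ℝ) * (μ * q))) *
          (ENNReal.ofReal ((1 - b ^ (μ - α)) ^ (-q)) * S) := by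
        have hreal : b ^ ((k : ℝ) * α * q) * (b ^ ((k : ℝ) * (μ - α)) / (1 - b ^ (μ - α))) ^ q =
            b ^ ((k : ℝ) * (μ * q)) * (1 - b ^ (μ - α)) ^ (-q) := by
          rw [Real.div_rpow (by positivity) hr.le, ← Real.rpow_mul hb0.le, Real.rpow_neg hr.le,
            ← div_eq_mul_inv, mul_div_assoc', ← Real.rpow_add hb0]
          ring_nf
        rw [ENNReal.mul_rpow_of_nonneg _ _ hq.le, ← ENNReal.rpow_mul, inv_mul_cancel₀ hq.ne',
          ENNReal.rpow_one, ENNReal.ofReal_rpow_of_nonneg (by positivity) hq.le, mul_left_comm,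
          ← ENNReal.ofReal_mul (by positivity), hreal, ENNReal.ofReal_mul (by positivity)]
        ring

lemma ofReal_rpow_mul_tsum_intLE_mul (hb : 1 < b) {t : ℝ} (ht : 0 < t) (K : ℝ≥0∞) (L : ℤ) :
    ENNReal.ofReal (b ^ (-(L : ℝ) * t)) *
        ∑' k : {k : ℤ // k ≤ L}, ENNReal.ofReal (b ^ ((k : ℝ) * t)) * K =
      ENNReal.ofReal (1 - b ^ (-t))⁻¹ * K := by
  have hb0 : 0 < b := by linarith
  have hcancel :
      b ^ (-(L : ℝ) * t) * (b ^ ((L : ℝ) * t) / (1 - b ^ (-t))) = (1 - b ^ (-t))⁻¹ := by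
    rw [mul_div_assoc', ← Real.rpow_add hb0, neg_mul, neg_add_cancel, Real.rpow_zero, one_div]
  rw [ENNReal.tsum_mul_right, tsum_ofReal_rpow_intLE hb ht, ← mul_assoc,
    ← ENNReal.ofReal_mul (by positivity), hcancel]

end WeightedSums

/-- for `1 < q < ∞`, `0 < 2μ < α` and nonnegative extended reals `(c_j)`,
`sup_L 2^{-Lμq} ∑_{k ≤ L} 2^{kαq} (∑_{j ≥ k} c_j 2^{-jα})^q ≤ C sup_L 2^{-Lμq} ∑_{j ≤ L} c_j^q`. -/
theorem stmt_5 (q α μ : ℝ) (hq1 : 1 < q) (hμ0 : 0 < μ) (hμα : 2 * μ < α)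
    (c : ℤ → ℝ≥0∞) :
    ∃ C : ℝ, 0 < C ∧
      (⨆ L : ℤ, ENNReal.ofReal ((2 : ℝ) ^ (-(L : ℝ) * μ * q)) *
          ∑' k : {k : ℤ // k ≤ L},
            ENNReal.ofReal ((2 : ℝ) ^ ((k.1 : ℝ) * α * q)) *
              (∑' j : {j : ℤ // (k : ℤ) ≤ j},
                  c j.1 * ENNReal.ofReal ((2 : ℝ) ^ (-(j.1 : ℝ) * α))) ^ q) ≤
        ENNReal.ofReal C *
          ⨆ L : ℤ, ENNReal.ofReal ((2 : ℝ) ^ (-(L : ℝ) * μ * q)) *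
            ∑' j : {j : ℤ // j ≤ L}, c j.1 ^ q := by
  have hq : 0 < q := by linarith
  have hμq : 0 < μ * q := by positivity
  have hμα' : μ < α := by linarith
  have hinner : 0 < 1 - (2 : ℝ) ^ (μ - α) :=
    sub_pos.mpr (Real.rpow_lt_one_of_one_lt_of_neg one_lt_two (sub_neg.mpr hμα'))
  have houter : 0 < 1 - (2 : ℝ) ^ (-(μ * q)) :=
    sub_pos.mpr (Real.rpow_lt_one_of_one_lt_of_neg one_lt_two (neg_lt_zero.mpr hμq))
  refine ⟨(1 - (2 : ℝ) ^ (-(μ * q)))⁻¹ * (1 - (2 : ℝ) ^ (μ - α)) ^ (-q), by positivity,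
    iSup_le fun L => ?_⟩
  calc _ ≤ ENNReal.ofReal ((2 : ℝ) ^ (-(L : ℝ) * (μ * q))) * ∑' k : {k : ℤ // k ≤ L},
          ENNReal.ofReal ((2 : ℝ) ^ ((k : ℝ) * (μ * q))) *
            (ENNReal.ofReal ((1 - (2 : ℝ) ^ (μ - α)) ^ (-q)) * _) := by
        rw [← mul_assoc (-(L : ℝ))]
        refine mul_le_mul_right (ENNReal.tsum_le_tsum fun k => ?_) _
        exact ofReal_rpow_mul_tsum_intGE_rpow_le one_lt_two hq hμα'
          (le_iSup (fun L : ℤ => ENNReal.ofReal ((2 : ℝ) ^ (-(L : ℝ) * μ * q)) *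
            ∑' j : {j : ℤ // j ≤ L}, c j.1 ^ q)) k
    _ = _ := by
      rw [ofReal_rpow_mul_tsum_intLE_mul one_lt_two hμq, ENNReal.ofReal_mul (by positivity),
        mul_assoc]
end

section
/- Let n ≥ 1, 0 < β < n, 1 < p₁ < n/β, 1/p₂ = 1/p₁ − β/n, 0 < q₁ < ∞, and let α, λ be reals with 0 < 2λ < α. Assume there is C₀ > 0 with ‖I^β g‖_{L^{p₂}} ≤ C₀ ‖g‖_{L^{p₁}} for every g ∈ L^{p₁}(ℝⁿ). Let (λ_j)_{j∈ℤ} be nonnegative reals and for each j let a_j : ℝⁿ → ℝ be measurable, supported in B_j = {x : |x| ≤ 2^j}, with ‖a_j‖_{L^{p₁}} ≤ 2^{−jα}. Then there is a constant C, depending only on q₁, α, λ and C₀, such that sup_{L∈ℤ} 2^{−Lλq₁} ∑_{k ≤ L} 2^{kαq₁} ( ∑_{j ≥ k} λ_j ‖(I^β a_j)·χ_{F_k}‖_{L^{p₂}} )^{q₁} ≤ C · sup_{L∈ℤ} 2^{−Lλq₁} ∑_{j ≤ L} λ_j^{q₁}. -/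
open MeasureTheory
open scoped ENNReal

/-!
Bound `‖(I^β a_j) χ_{F_k}‖_{p₂} ≤ ‖I^β a_j‖_{p₂} ≤ C₀ 2^{-jα}`. Testing the right-hand supremum `S`
at `L = j` gives `λ_j ≤ 2^{jλ} S^{1/q₁}`, so the inner sum over `j ≥ k` is dominated by the geometric
series `C₀ S^{1/q₁} ∑_{j ≥ k} 2^{j(λ-α)} ≲ 2^{k(λ-α)}`, which converges because `λ < α`. The `k`-th
term of the left-hand side is then `≲ 2^{kλq₁} S`, and summing over `k ≤ L` is a second geometric
series, of size `≲ 2^{Lλq₁}`, convergent because `λ q₁ > 0`.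
-/

section IntTsum

variable {M : Type*} [AddCommMonoid M] [TopologicalSpace M]

def natEquivIntIci (k : ℤ) : ℕ ≃ {j : ℤ // k ≤ j} where
  toFun m := ⟨k + m, by omega⟩
  invFun j := (j.1 - k).toNat
  left_inv m := by simp
  right_inv j := Subtype.ext (by have := j.2; simp; omega)

def natEquivIntIic (L : ℤ) : ℕ ≃ {j : ℤ // j ≤ L} where
  toFun m := ⟨L - m, by omega⟩
  invFun j := (L - j.1).toNat
  left_inv m := by simp
  right_inv j := Subtype.ext (by have := j.2; simp; omega)

theorem tsum_int_Ici_eq (f : ℤ → M) (k : ℤ) :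
    ∑' j : {j : ℤ // k ≤ j}, f j = ∑' m : ℕ, f (k + m) :=
  ((natEquivIntIci k).tsum_eq (f ∘ Subtype.val)).symm

theorem tsum_int_Iic_eq (f : ℤ → M) (L : ℤ) :
    ∑' j : {j : ℤ // j ≤ L}, f j = ∑' m : ℕ, f (L - m) :=
  ((natEquivIntIic L).tsum_eq (f ∘ Subtype.val)).symm

end IntTsum

section TwoRpow

theorem ofReal_two_rpow_mul_ofReal_two_rpow (a b : ℝ) :
    ENNReal.ofReal ((2 : ℝ) ^ a) * ENNReal.ofReal ((2 : ℝ) ^ b) =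
      ENNReal.ofReal ((2 : ℝ) ^ (a + b)) := by
  rw [← ENNReal.ofReal_mul (by positivity), Real.rpow_add two_pos]

theorem ofReal_two_rpow_rpow (a b : ℝ) :
    ENNReal.ofReal ((2 : ℝ) ^ a) ^ b = ENNReal.ofReal ((2 : ℝ) ^ (a * b)) := by
  rw [ENNReal.ofReal_rpow_of_pos (by positivity), Real.rpow_mul zero_le_two]

theorem ofReal_two_rpow_mul_ofReal_two_rpow_neg (a : ℝ) :
    ENNReal.ofReal ((2 : ℝ) ^ a) * ENNReal.ofReal ((2 : ℝ) ^ (-a)) = 1 := by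
  simp [ofReal_two_rpow_mul_ofReal_two_rpow]

theorem tsum_int_Ici_ofReal_two_rpow (k : ℤ) (x : ℝ) :
    ∑' j : {j : ℤ // k ≤ j}, ENNReal.ofReal ((2 : ℝ) ^ ((j : ℝ) * x)) =
      ENNReal.ofReal ((2 : ℝ) ^ ((k : ℝ) * x)) * (1 - ENNReal.ofReal ((2 : ℝ) ^ x))⁻¹ := by
  rw [tsum_int_Ici_eq (fun j : ℤ => ENNReal.ofReal ((2 : ℝ) ^ ((j : ℝ) * x))),
    ← ENNReal.tsum_geometric, ← ENNReal.tsum_mul_left]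
  congr 1 with m
  rw [← ENNReal.rpow_natCast, ofReal_two_rpow_rpow, ofReal_two_rpow_mul_ofReal_two_rpow]
  push_cast
  ring_nf

theorem tsum_int_Iic_ofReal_two_rpow (L : ℤ) (x : ℝ) :
    ∑' j : {j : ℤ // j ≤ L}, ENNReal.ofReal ((2 : ℝ) ^ ((j : ℝ) * x)) =
      ENNReal.ofReal ((2 : ℝ) ^ ((L : ℝ) * x)) * (1 - ENNReal.ofReal ((2 : ℝ) ^ (-x)))⁻¹ := by
  rw [tsum_int_Iic_eq (fun j : ℤ => ENNReal.ofReal ((2 : ℝ) ^ ((j : ℝ) * x))),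
    ← ENNReal.tsum_geometric, ← ENNReal.tsum_mul_left]
  congr 1 with m
  rw [← ENNReal.rpow_natCast, ofReal_two_rpow_rpow, ofReal_two_rpow_mul_ofReal_two_rpow]
  push_cast
  ring_nf

theorem inv_one_sub_ofReal_two_rpow_ne_top {x : ℝ} (hx : x < 0) :
    (1 - ENNReal.ofReal ((2 : ℝ) ^ x))⁻¹ ≠ ∞ :=
  ENNReal.inv_ne_top.mpr (tsub_pos_of_lt (ENNReal.ofReal_lt_one.mpr
    (Real.rpow_lt_one_of_one_lt_of_neg one_lt_two hx))).ne'

end TwoRpow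

section MorreySup

/-- For `u_k = 2^{kαq} ‖f χ_{F_k}‖_p^q` this is the `q`-th power of the Herz–Morrey norm of `f`. -/
noncomputable def morreySup (lam q : ℝ) (u : ℤ → ℝ≥0∞) : ℝ≥0∞ :=
  ⨆ L : ℤ, ENNReal.ofReal ((2 : ℝ) ^ (-(L : ℝ) * lam * q)) * ∑' k : {k : ℤ // k ≤ L}, u k.1

variable {lam q : ℝ}

theorem le_morreySup (u : ℤ → ℝ≥0∞) (L : ℤ) :
    ENNReal.ofReal ((2 : ℝ) ^ (-(L : ℝ) * lam * q)) * ∑' k : {k : ℤ // k ≤ L}, u k.1 ≤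
      morreySup lam q u :=
  le_iSup (fun L : ℤ => ENNReal.ofReal ((2 : ℝ) ^ (-(L : ℝ) * lam * q)) *
    ∑' k : {k : ℤ // k ≤ L}, u k.1) L

theorem le_ofReal_two_rpow_mul_morreySup_rpow (hq : 0 < q) (b : ℤ → ℝ≥0∞) (j : ℤ) :
    b j ≤ ENNReal.ofReal ((2 : ℝ) ^ ((j : ℝ) * lam)) *
      morreySup lam q (fun i => b i ^ q) ^ (1 / q) := by
  set S := morreySup lam q (fun i => b i ^ q)
  have hpow : b j ^ q ≤ ENNReal.ofReal ((2 : ℝ) ^ ((j : ℝ) * lam * q)) * S :=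
    calc b j ^ q
        = ENNReal.ofReal ((2 : ℝ) ^ ((j : ℝ) * lam * q)) *
            (ENNReal.ofReal ((2 : ℝ) ^ (-(j : ℝ) * lam * q)) * b j ^ q) := by
          rw [← mul_assoc, neg_mul, neg_mul, ofReal_two_rpow_mul_ofReal_two_rpow_neg, one_mul]
      _ ≤ ENNReal.ofReal ((2 : ℝ) ^ ((j : ℝ) * lam * q)) * S := by
          gcongr
          refine le_trans ?_ (le_morreySup (fun i => b i ^ q) j)
          gcongr
          exact ENNReal.le_tsum (⟨j, le_rfl⟩ : {i : ℤ // i ≤ j})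
  calc b j = (b j ^ q) ^ (1 / q) := by
        rw [← ENNReal.rpow_mul, mul_one_div_cancel hq.ne', ENNReal.rpow_one]
    _ ≤ (ENNReal.ofReal ((2 : ℝ) ^ ((j : ℝ) * lam * q)) * S) ^ (1 / q) := by gcongr
    _ = ENNReal.ofReal ((2 : ℝ) ^ ((j : ℝ) * lam)) * S ^ (1 / q) := by
        rw [ENNReal.mul_rpow_of_nonneg _ _ (by positivity), ofReal_two_rpow_rpow]
        field_simp

theorem morreySup_le_of_le_ofReal_two_rpow {u : ℤ → ℝ≥0∞} {A : ℝ≥0∞}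
    (hu : ∀ k : ℤ, u k ≤ A * ENNReal.ofReal ((2 : ℝ) ^ ((k : ℝ) * (lam * q)))) :
    morreySup lam q u ≤ A * (1 - ENNReal.ofReal ((2 : ℝ) ^ (-(lam * q))))⁻¹ := by
  refine iSup_le fun L => ?_
  calc ENNReal.ofReal ((2 : ℝ) ^ (-(L : ℝ) * lam * q)) * ∑' k : {k : ℤ // k ≤ L}, u k.1
      ≤ ENNReal.ofReal ((2 : ℝ) ^ (-(L : ℝ) * lam * q)) *
          ∑' k : {k : ℤ // k ≤ L}, A * ENNReal.ofReal ((2 : ℝ) ^ ((k.1 : ℝ) * (lam * q))) := by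
        gcongr with k
        exact hu k
    _ = A * (1 - ENNReal.ofReal ((2 : ℝ) ^ (-(lam * q))))⁻¹ *
          (ENNReal.ofReal ((2 : ℝ) ^ ((L : ℝ) * (lam * q))) *
            ENNReal.ofReal ((2 : ℝ) ^ (-((L : ℝ) * (lam * q))))) := by
        rw [ENNReal.tsum_mul_left, tsum_int_Iic_ofReal_two_rpow]
        ring_nf
    _ = A * (1 - ENNReal.ofReal ((2 : ℝ) ^ (-(lam * q))))⁻¹ := by
        rw [ofReal_two_rpow_mul_ofReal_two_rpow_neg, mul_one]

end MorreySup

theorem morreySup_tsum_Ici_le {lam q α : ℝ} (hq : 0 < q) (c : ℝ≥0∞) (b : ℤ → ℝ≥0∞)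
    (N : ℤ → ℤ → ℝ≥0∞) (hN : ∀ k j : ℤ, N k j ≤ c * ENNReal.ofReal ((2 : ℝ) ^ (-(j : ℝ) * α))) :
    morreySup lam q (fun k => ENNReal.ofReal ((2 : ℝ) ^ ((k : ℝ) * α * q)) *
        (∑' j : {j : ℤ // k ≤ j}, b j.1 * N k j.1) ^ q) ≤
      c ^ q * (1 - ENNReal.ofReal ((2 : ℝ) ^ (lam - α)))⁻¹ ^ q *
        (1 - ENNReal.ofReal ((2 : ℝ) ^ (-(lam * q))))⁻¹ * morreySup lam q (fun j => b j ^ q) := by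
  set S := morreySup lam q (fun j => b j ^ q)
  set G := (1 - ENNReal.ofReal ((2 : ℝ) ^ (lam - α)))⁻¹
  have hinner : ∀ k : ℤ, ∑' j : {j : ℤ // k ≤ j}, b j.1 * N k j.1 ≤
      c * S ^ (1 / q) * G * ENNReal.ofReal ((2 : ℝ) ^ ((k : ℝ) * (lam - α))) := fun k =>
    calc ∑' j : {j : ℤ // k ≤ j}, b j.1 * N k j.1
        ≤ ∑' j : {j : ℤ // k ≤ j}, ENNReal.ofReal ((2 : ℝ) ^ ((j.1 : ℝ) * lam)) * S ^ (1 / q) *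
            (c * ENNReal.ofReal ((2 : ℝ) ^ (-(j.1 : ℝ) * α))) := by
          gcongr with j
          · exact le_ofReal_two_rpow_mul_morreySup_rpow hq b j
          · exact hN k j
      _ = c * S ^ (1 / q) *
            ∑' j : {j : ℤ // k ≤ j}, ENNReal.ofReal ((2 : ℝ) ^ ((j.1 : ℝ) * (lam - α))) := by
          rw [← ENNReal.tsum_mul_left]
          congr 1 with j
          rw [show (j.1 : ℝ) * (lam - α) = j.1 * lam + -j.1 * α by ring,
            ← ofReal_two_rpow_mul_ofReal_two_rpow]
          ring
      _ = c * S ^ (1 / q) * G * ENNReal.ofReal ((2 : ℝ) ^ ((k : ℝ) * (lam - α))) := by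
          rw [tsum_int_Ici_ofReal_two_rpow]
          ring
  refine (morreySup_le_of_le_ofReal_two_rpow (A := c ^ q * G ^ q * S) fun k => ?_).trans_eq
    (by ring)
  calc ENNReal.ofReal ((2 : ℝ) ^ ((k : ℝ) * α * q)) *
        (∑' j : {j : ℤ // k ≤ j}, b j.1 * N k j.1) ^ q
      ≤ ENNReal.ofReal ((2 : ℝ) ^ ((k : ℝ) * α * q)) *
          (c * S ^ (1 / q) * G * ENNReal.ofReal ((2 : ℝ) ^ ((k : ℝ) * (lam - α)))) ^ q := by
        gcongr
        exact hinner k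
    _ = c ^ q * G ^ q * S * (ENNReal.ofReal ((2 : ℝ) ^ ((k : ℝ) * α * q)) *
          ENNReal.ofReal ((2 : ℝ) ^ ((k : ℝ) * (lam - α) * q))) := by
        simp only [ENNReal.mul_rpow_of_nonneg _ _ hq.le, ofReal_two_rpow_rpow,
          ← ENNReal.rpow_mul, one_div_mul_cancel hq.ne', ENNReal.rpow_one]
        ring
    _ = c ^ q * G ^ q * S * ENNReal.ofReal ((2 : ℝ) ^ ((k : ℝ) * (lam * q))) := by
        rw [ofReal_two_rpow_mul_ofReal_two_rpow]
        ring_nf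

theorem stmt_11_general (n : ℕ) (β p₁ p₂ q₁ α lam : ℝ)
    (hq₁ : 0 < q₁)
    (hlam : 0 < lam) (h2lam : 2 * lam < α)
    (C₀ : ℝ)
    (hbound : ∀ g : EuclideanSpace ℝ (Fin n) → ℝ, MemLp g (ENNReal.ofReal p₁) volume →
      eLpNorm (rieszPot n β g) (ENNReal.ofReal p₂) volume ≤
        ENNReal.ofReal C₀ * eLpNorm g (ENNReal.ofReal p₁) volume)
    (lamSeq : ℤ → ℝ)
    (a : ℤ → EuclideanSpace ℝ (Fin n) → ℝ)
    (ha_meas : ∀ j, Measurable (a j))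
    (ha_norm : ∀ j : ℤ, eLpNorm (a j) (ENNReal.ofReal p₁) volume ≤
      ENNReal.ofReal ((2 : ℝ) ^ (-(j : ℝ) * α))) :
    ∃ C : ℝ, 0 < C ∧
      (⨆ L : ℤ, ENNReal.ofReal ((2 : ℝ) ^ (-(L : ℝ) * lam * q₁)) *
          ∑' k : {k : ℤ // k ≤ L},
            ENNReal.ofReal ((2 : ℝ) ^ ((k.1 : ℝ) * α * q₁)) *
              (∑' j : {j : ℤ // (k : ℤ) ≤ j},
                  ENNReal.ofReal (lamSeq j.1) *
                    eLpNorm ((annulus n k.1).indicator (rieszPot n β (a j.1)))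
                      (ENNReal.ofReal p₂) volume) ^ q₁) ≤
        ENNReal.ofReal C *
          ⨆ L : ℤ, ENNReal.ofReal ((2 : ℝ) ^ (-(L : ℝ) * lam * q₁)) *
            ∑' j : {j : ℤ // j ≤ L}, ENNReal.ofReal (lamSeq j.1) ^ q₁ := by
  have hN : ∀ k j : ℤ, eLpNorm ((annulus n k).indicator (rieszPot n β (a j)))
      (ENNReal.ofReal p₂) volume ≤ ENNReal.ofReal C₀ * ENNReal.ofReal ((2 : ℝ) ^ (-(j : ℝ) * α)) :=
    fun k j => calc
      _ ≤ eLpNorm (rieszPot n β (a j)) (ENNReal.ofReal p₂) volume := eLpNorm_indicator_le _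
      _ ≤ ENNReal.ofReal C₀ * eLpNorm (a j) (ENNReal.ofReal p₁) volume :=
        hbound _ ⟨(ha_meas j).aestronglyMeasurable, (ha_norm j).trans_lt ENNReal.ofReal_lt_top⟩
      _ ≤ _ := by gcongr; exact ha_norm j
  set K := ENNReal.ofReal C₀ ^ q₁ * (1 - ENNReal.ofReal ((2 : ℝ) ^ (lam - α)))⁻¹ ^ q₁ *
    (1 - ENNReal.ofReal ((2 : ℝ) ^ (-(lam * q₁))))⁻¹
  have hK : K ≠ ∞ := by
    refine ENNReal.mul_ne_top (ENNReal.mul_ne_top ?_ ?_) ?_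
    · exact ENNReal.rpow_ne_top_of_nonneg hq₁.le ENNReal.ofReal_ne_top
    · exact ENNReal.rpow_ne_top_of_nonneg hq₁.le
        (inv_one_sub_ofReal_two_rpow_ne_top (by linarith))
    · exact inv_one_sub_ofReal_two_rpow_ne_top (by simp; positivity)
  refine ⟨K.toReal + 1, by positivity, ?_⟩
  calc _ ≤ K * morreySup lam q₁ (fun j => ENNReal.ofReal (lamSeq j) ^ q₁) :=
        morreySup_tsum_Ici_le hq₁ _ (fun j => ENNReal.ofReal (lamSeq j)) _ hN
    _ ≤ _ := mul_le_mul_left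
        ((ENNReal.ofReal_toReal hK).symm.le.trans (ENNReal.ofReal_le_ofReal (by linarith))) _

/-- estimate of
`sup_L 2^{-Lλq₁} ∑_{k ≤ L} 2^{kαq₁} (∑_{j ≥ k} λ_j ‖(I^β a_j)χ_{F_k}‖_{L^{p₂}})^{q₁}`
by `C sup_L 2^{-Lλq₁} ∑_{j ≤ L} λ_j^{q₁}`. -/
theorem stmt_11 (n : ℕ) (hn : 1 ≤ n) (β p₁ p₂ q₁ α lam : ℝ)
    (hβ0 : 0 < β) (hβn : β < n) (hp₁ : 1 < p₁) (hp₁n : p₁ < n / β)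
    (hp₂ : 1 / p₂ = 1 / p₁ - β / n) (hq₁ : 0 < q₁)
    (hlam : 0 < lam) (h2lam : 2 * lam < α)
    (C₀ : ℝ) (hC₀ : 0 < C₀)
    (hbound : ∀ g : EuclideanSpace ℝ (Fin n) → ℝ, MemLp g (ENNReal.ofReal p₁) volume →
      eLpNorm (rieszPot n β g) (ENNReal.ofReal p₂) volume ≤
        ENNReal.ofReal C₀ * eLpNorm g (ENNReal.ofReal p₁) volume)
    (lamSeq : ℤ → ℝ) (hlamSeq : ∀ j, 0 ≤ lamSeq j)
    (a : ℤ → EuclideanSpace ℝ (Fin n) → ℝ)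
    (ha_meas : ∀ j, Measurable (a j))
    (ha_supp : ∀ j, Function.support (a j) ⊆ Metric.closedBall 0 ((2 : ℝ) ^ j))
    (ha_norm : ∀ j : ℤ, eLpNorm (a j) (ENNReal.ofReal p₁) volume ≤
      ENNReal.ofReal ((2 : ℝ) ^ (-(j : ℝ) * α))) :
    ∃ C : ℝ, 0 < C ∧
      (⨆ L : ℤ, ENNReal.ofReal ((2 : ℝ) ^ (-(L : ℝ) * lam * q₁)) *
          ∑' k : {k : ℤ // k ≤ L},
            ENNReal.ofReal ((2 : ℝ) ^ ((k.1 : ℝ) * α * q₁)) *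
              (∑' j : {j : ℤ // (k : ℤ) ≤ j},
                  ENNReal.ofReal (lamSeq j.1) *
                    eLpNorm ((annulus n k.1).indicator (rieszPot n β (a j.1)))
                      (ENNReal.ofReal p₂) volume) ^ q₁) ≤
        ENNReal.ofReal C *
          ⨆ L : ℤ, ENNReal.ofReal ((2 : ℝ) ^ (-(L : ℝ) * lam * q₁)) *
            ∑' j : {j : ℤ // j ≤ L}, ENNReal.ofReal (lamSeq j.1) ^ q₁ :=
  stmt_11_general n β p₁ p₂ q₁ α lam hq₁ hlam h2lam C₀ hbound lamSeq a ha_meas ha_norm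
end
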